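/- Let W be a complete discrete valuation ring of characteristic p with uniformizer μ, algebraically closed residue field and normalized valuation ν. Let q = p^e, r ≥ 2, 1 ≤ j ≤ r−1, t ∈ W, and g'_1, …, g'_{r−1} ∈ W. Set φ = tX + X^{q^j} + X^{q^r} and φ' = tX + Σ_{i=1}^{r−1} g'_i X^{q^i} + X^{q^r} in W[X]; write g_j = 1 and g_i = 0 for i ≠ j (1 ≤ i ≤ r−1). For n ≥ 1 let Iso_n be the set of q-polynomials u over W/(μ^n) that are compositional units and satisfy u∘φ̄ = φ̄'∘u (bars denoting reduction of coefficients modulo μ^n). Then for all nonnegative integers δ_1, …, δ_{r−1} and positive δ_r with Σ_{i=1}^{r−1} δ_i(q^i−1) = δ_r(q^r−1), one has in ℕ∪{∞}: gcd(q^r−1, q^j−1)·ν(g_1^{δ_1}⋯g_{r−1}^{δ_{r−1}} − (g'_1)^{δ_1}⋯(g'_{r−1})^{δ_{r−1}}) ≥ (Σ_{1≤i≤r−1, i≠j} δ_i)·Σ_{n≥1} #Iso_n. -/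

import Mathlib

/-!
Over `W / (μ^n)` the maximal ideal is nilpotent. An isomorphism `u` reduces to a degree-one
polynomial over the residue field, so its higher coefficients are nilpotent, while comparing
top coefficients in `u ∘ φ = φ' ∘ u` shows that its leading coefficient is fixed by
`x ↦ x ^ q ^ r`; hence `u = c X` with `c` a unit. Comparing the coefficients of `X ^ q ^ i`
then forces `g'_i ≡ 0 mod μ^n` for `i ≠ j`, `c ^ (q ^ r - 1) = 1` and `g'_j c ^ (q ^ j - 1) = 1`.
Two such scalars differ by a root of unity of order dividing `G = gcd(q^r - 1, q^j - 1)`, and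
since `p ∤ G` these roots inject into the residue field, so `#Iso_n ≤ G`. If `M` is the last
level `≤ N` with an isomorphism, the first `N` terms of the sum are at most `G M`, while
`μ^M ∣ g'_i` for all `i ≠ j` makes `μ^(M Σ_{i≠j} δ_i)` divide the difference of products.
-/

/-- A `q`-polynomial: all nonzero coefficients sit in degrees that are powers of `q`. -/
def IsqPoly (q : ℕ) {R : Type*} [Semiring R] (f : Polynomial R) : Prop :=
  ∀ n ∈ f.support, ∃ i : ℕ, n = q ^ i

/-- The set of isomorphisms from `φ` to `ψ` over `R`: `q`-polynomials that are
compositional units and intertwine `φ` and `ψ`. -/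
def IsoSet (q : ℕ) {R : Type*} [CommRing R] (φ ψ : Polynomial R) : Set (Polynomial R) :=
  {u | IsqPoly q u ∧
    (∃ v : Polynomial R, IsqPoly q v ∧ u.comp v = Polynomial.X ∧ v.comp u = Polynomial.X) ∧
    u.comp φ = ψ.comp u}

open Polynomial Finset IsLocalRing

section DrinfeldPoly

variable {R : Type*} [CommRing R]

/-- `φ_T = t + g_1 τ + ⋯ + g_{r-1} τ^{r-1} + Δ τ^r`, written as a `q`-polynomial. -/
noncomputable def drinfeldPoly (q r : ℕ) (t : R) (g : ℕ → R) (Δ : R) : R[X] :=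
  C t * X + (∑ i ∈ Icc 1 (r - 1), C (g i) * X ^ q ^ i) + C Δ * X ^ q ^ r

variable {q r : ℕ} (t : R) (g : ℕ → R) (Δ : R)

lemma coeff_sum_C_mul_X_pow_pow (hq : 2 ≤ q) (s : Finset ℕ) (a : ℕ → R) (k : ℕ) :
    (∑ i ∈ s, C (a i) * X ^ q ^ i).coeff (q ^ k) = if k ∈ s then a k else 0 := by
  simp only [finsetSum_coeff, coeff_C_mul_X_pow, Nat.pow_right_inj hq]
  simp [eq_comm (a := k)]

lemma coeff_drinfeldPoly_pow (hq : 2 ≤ q) {k : ℕ} (hk : k ∈ Icc 1 (r - 1)) :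
    (drinfeldPoly q r t g Δ).coeff (q ^ k) = g k := by
  obtain ⟨hk1, hkr⟩ := mem_Icc.mp hk
  have h1 : q ^ k ≠ 1 := (Nat.one_lt_pow (by omega) hq).ne'
  have hr : q ^ k ≠ q ^ r := by
    rw [Ne, Nat.pow_right_inj hq]; omega
  simp [drinfeldPoly, coeff_sum_C_mul_X_pow_pow hq, hk, coeff_X, coeff_X_pow, h1.symm, hr,
    coeff_C_mul]

lemma coeff_drinfeldPoly_pow_self (hq : 2 ≤ q) (hr : 1 ≤ r) :
    (drinfeldPoly q r t g Δ).coeff (q ^ r) = Δ := by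
  have h1 : q ^ r ≠ 1 := (Nat.one_lt_pow (by omega) hq).ne'
  have hrIcc : r ∉ Icc 1 (r - 1) := by simp; omega
  simp [drinfeldPoly, coeff_sum_C_mul_X_pow_pow hq, hrIcc, coeff_X, h1.symm, coeff_C_mul]

lemma natDegree_drinfeldPoly_le (hq : 2 ≤ q) (hr : 1 ≤ r) :
    (drinfeldPoly q r t g Δ).natDegree ≤ q ^ r := by
  have hpow : ∀ i ≤ r, q ^ i ≤ q ^ r := fun i hi => Nat.pow_le_pow_right (by omega) hi
  refine natDegree_add_le_of_degree_le (natDegree_add_le_of_degree_le ?_ ?_) ?_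
  · exact (natDegree_C_mul_le _ _).trans (natDegree_X_le.trans (by simpa using hpow 0 (by omega)))
  · refine natDegree_sum_le_of_forall_le _ _ fun i hi => (natDegree_C_mul_le _ _).trans ?_
    exact natDegree_X_pow_le _ |>.trans (hpow i (by simp at hi; omega))
  · exact (natDegree_C_mul_le _ _).trans (natDegree_X_pow_le _)

lemma natDegree_drinfeldPoly [Nontrivial R] (hq : 2 ≤ q) (hr : 1 ≤ r) :
    (drinfeldPoly q r t g 1).natDegree = q ^ r :=
  le_antisymm (natDegree_drinfeldPoly_le t g 1 hq hr)
    (le_natDegree_of_ne_zero (by rw [coeff_drinfeldPoly_pow_self t g 1 hq hr]; exact one_ne_zero))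

lemma monic_drinfeldPoly [Nontrivial R] (hq : 2 ≤ q) (hr : 1 ≤ r) :
    (drinfeldPoly q r t g 1).Monic := by
  rw [Monic, leadingCoeff, natDegree_drinfeldPoly t g hq hr,
    coeff_drinfeldPoly_pow_self t g 1 hq hr]

lemma drinfeldPoly_comp_C_mul_X (c : R) :
    (drinfeldPoly q r t g Δ).comp (C c * X) =
      drinfeldPoly q r (t * c) (fun i => g i * c ^ q ^ i) (Δ * c ^ q ^ r) := by
  simp only [drinfeldPoly, add_comp, Polynomial.sum_comp, mul_comp, C_comp, X_comp, pow_comp,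
    mul_pow, ← C_pow, ← C_mul, ← mul_assoc]

lemma C_mul_drinfeldPoly (c : R) :
    C c * drinfeldPoly q r t g Δ = drinfeldPoly q r (c * t) (fun i => c * g i) (c * Δ) := by
  simp only [drinfeldPoly, mul_add, mul_sum, C_mul, mul_assoc]

lemma drinfeldPoly_map {S : Type*} [CommRing S] (f : R →+* S) :
    (drinfeldPoly q r t g Δ).map f = drinfeldPoly q r (f t) (f ∘ g) (f Δ) := by
  simp [drinfeldPoly, Polynomial.map_sum]

end DrinfeldPoly

lemma IsNilpotent.eq_zero_of_eq_pow {A : Type*} [CommRing A] {x : A} (hx : IsNilpotent x)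
    {s : ℕ} (hs : 2 ≤ s) (h : x = x ^ s) : x = 0 := by
  have hunit : IsUnit (1 - x ^ (s - 1)) := (hx.pow_of_pos (by omega)).isUnit_one_sub
  refine hunit.mul_left_eq_zero.mp ?_
  rw [mul_sub, mul_one, ← pow_succ', Nat.sub_add_cancel (by omega), ← h, sub_self]

lemma IsqPoly.eq_C_mul_X {q : ℕ} (hq : q ≠ 0) {R : Type*} [Semiring R] {u : R[X]}
    (hu : IsqPoly q u) (hdeg : u.natDegree ≤ 1) : u = C (u.coeff 1) * X := by
  ext n
  rw [coeff_C_mul_X]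
  split_ifs with hn
  · rw [hn]
  · by_contra h
    obtain ⟨i, rfl⟩ := hu _ (mem_support_iff.mpr h)
    have := (le_natDegree_of_ne_zero h).trans hdeg
    have := Nat.one_le_pow i q (by omega)
    omega

lemma natDegree_map_eq_one_of_comp_eq_X {A K : Type*} [CommRing A] [CommRing K] [IsDomain K]
    (f : A →+* K) {u v : A[X]} (h : u.comp v = X) : (u.map f).natDegree = 1 := by
  have := congrArg natDegree (congrArg (map f) h)
  rw [map_comp, natDegree_comp, Polynomial.map_X, natDegree_X] at this
  exact Nat.eq_one_of_mul_eq_one_right this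

lemma leadingCoeff_eq_pow_of_comp_eq_comp {A : Type*} [CommRing A] {u φ ψ : A[X]}
    (hφ : φ.Monic) (hψ : ψ.Monic) (hdeg : φ.natDegree = ψ.natDegree) (hφ0 : φ.natDegree ≠ 0)
    (hu : u.natDegree ≠ 0) (h : u.comp φ = ψ.comp u) :
    u.leadingCoeff = u.leadingCoeff ^ ψ.natDegree := by
  have hl := coeff_comp_degree_mul_degree (p := u) hφ0
  have hr := coeff_comp_degree_mul_degree (p := ψ) hu
  rw [h, hφ.leadingCoeff, one_pow, mul_one, hdeg, mul_comm] at hl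
  rwa [hψ.leadingCoeff, one_mul, hl] at hr

lemma Units.mul_pow_pred_eq_one {A : Type*} [CommRing A] {c : Aˣ} {a : A} {n : ℕ} (hn : n ≠ 0)
    (h : (c : A) = a * ↑c ^ n) : a * ↑(c ^ (n - 1)) = 1 := by
  refine (Units.mul_left_inj c).mp ?_
  rw [one_mul, mul_assoc, ← Units.val_mul, ← pow_succ, Nat.sub_add_cancel (by omega),
    Units.val_pow_eq_pow_val, ← h]

section LocalRing

variable {A : Type*} [CommRing A] [IsLocalRing A]

lemma natDegree_le_one_of_mem_isoSet (hnil : ∀ a ∈ maximalIdeal A, IsNilpotent a) {q : ℕ}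
    {φ ψ : A[X]} (hφ : φ.Monic) (hψ : ψ.Monic) (hdeg : φ.natDegree = ψ.natDegree)
    (h2 : 2 ≤ ψ.natDegree) {u : A[X]} (hu : u ∈ IsoSet q φ ψ) : u.natDegree ≤ 1 := by
  obtain ⟨-, ⟨v, -, huv, -⟩, hcomm⟩ := hu
  by_contra! hu1
  have hres : residue A u.leadingCoeff = 0 := by
    rw [leadingCoeff, ← coeff_map]
    exact coeff_eq_zero_of_natDegree_lt
      ((natDegree_map_eq_one_of_comp_eq_X (residue A) huv).trans_lt hu1)
  have hfix := leadingCoeff_eq_pow_of_comp_eq_comp hφ hψ hdeg (by omega) (by omega) hcomm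
  have hzero := ((hnil _ ((residue_eq_zero_iff _).mp hres)).eq_zero_of_eq_pow h2 hfix)
  rw [leadingCoeff_eq_zero.mp hzero, natDegree_zero] at hu1
  omega

variable {q r : ℕ}

theorem exists_unit_of_mem_isoSet_drinfeldPoly (hnil : ∀ a ∈ maximalIdeal A, IsNilpotent a)
    (hq : 2 ≤ q) (hr : 1 ≤ r) {s t : A} {g h : ℕ → A} {u : A[X]}
    (hu : u ∈ IsoSet q (drinfeldPoly q r s g 1) (drinfeldPoly q r t h 1)) :
    ∃ c : Aˣ, u = C (c : A) * X ∧ (∀ k ∈ Icc 1 (r - 1), (c : A) * g k = h k * c ^ q ^ k) ∧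
      (c : A) = c ^ q ^ r := by
  have hψdeg := natDegree_drinfeldPoly t h hq hr
  have hu1 := natDegree_le_one_of_mem_isoSet hnil (monic_drinfeldPoly s g hq hr)
    (monic_drinfeldPoly t h hq hr) ((natDegree_drinfeldPoly s g hq hr).trans hψdeg.symm)
    (hψdeg ▸ Nat.le_self_pow (by omega) _ |>.trans' hq) hu
  obtain ⟨hqu, ⟨v, -, huv, -⟩, hcomm⟩ := hu
  have hC := hqu.eq_C_mul_X (by omega) hu1
  obtain ⟨c, hc⟩ : IsUnit (u.coeff 1) := by
    refine IsUnit.of_mul_eq_one (v.coeff 1) ?_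
    rw [hC, mul_comp, C_comp, X_comp] at huv
    simpa using congrArg (coeff · 1) huv
  rw [← hc] at hC
  rw [hC, mul_comp, X_comp, C_comp, C_mul_drinfeldPoly, drinfeldPoly_comp_C_mul_X] at hcomm
  refine ⟨c, hC, fun k hk => ?_, ?_⟩
  · simpa [coeff_drinfeldPoly_pow _ _ _ hq hk] using congrArg (coeff · (q ^ k)) hcomm
  · simpa [coeff_drinfeldPoly_pow_self _ _ _ hq hr] using congrArg (coeff · (q ^ r)) hcomm

variable {m : ℕ}

lemma IsLocalRing.eq_one_of_pow_eq_one (hm : IsUnit (m : A)) {w : A} (hw : w ^ m = 1)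
    (hres : residue A w = 1) : w = 1 := by
  have hsum : IsUnit (∑ i ∈ range m, w ^ i) := by
    rw [← isUnit_map_iff (residue A)]
    simpa [hres] using hm.map (residue A)
  refine sub_eq_zero.mp (hsum.mul_right_eq_zero.mp ?_)
  rw [geom_sum_mul, hw, sub_self]

lemma IsLocalRing.card_rootsOfUnity_le (hm : IsUnit (m : A)) :
    ENat.card (rootsOfUnity m A) ≤ m := by
  have : NeZero m := ⟨by rintro rfl; simp at hm⟩
  have hinj : Function.Injective (restrictRootsOfUnity (residue A) m) := by
    refine (injective_iff_map_eq_one _).mpr fun ζ hζ => ?_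
    ext
    refine eq_one_of_pow_eq_one hm ?_ ?_
    · simpa using congrArg Units.val (mem_rootsOfUnity _ _ |>.mp ζ.2)
    · simpa using congrArg (fun x : rootsOfUnity m (ResidueField A) =>
        ((x : (ResidueField A)ˣ) : ResidueField A)) hζ
  calc ENat.card (rootsOfUnity m A)
      ≤ ENat.card (rootsOfUnity m (ResidueField A)) := ENat.card_le_card_of_injective hinj
    _ = Nat.card (rootsOfUnity m (ResidueField A)) := ENat.card_eq_coe_natCard _
    _ ≤ m := by exact_mod_cast card_rootsOfUnity _ _

lemma encard_setOf_pow_eq_one_le {E₁ E₂ : ℕ} (hm : IsUnit ((E₁.gcd E₂ : ℕ) : A)) (a : A) :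
    {c : Aˣ | c ^ E₁ = 1 ∧ a * ↑(c ^ E₂) = 1}.encard ≤ E₁.gcd E₂ := by
  rcases Set.eq_empty_or_nonempty {c : Aˣ | c ^ E₁ = 1 ∧ a * ↑(c ^ E₂) = 1}
    with h | ⟨c₀, h₀, ha₀⟩
  · rw [h, Set.encard_empty]
    exact zero_le
  have hroot : ∀ c : Aˣ, c ^ E₁ = 1 ∧ a * ↑(c ^ E₂) = 1 →
      c * c₀⁻¹ ∈ rootsOfUnity (E₁.gcd E₂) A := by
    rintro c ⟨h₁, ha⟩
    have h₂ : c ^ E₂ = c₀ ^ E₂ :=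
      Units.ext (by linear_combination (↑(c₀ ^ E₂) : A) * ha - ↑(c ^ E₂) * ha₀)
    rw [mem_rootsOfUnity, pow_gcd_eq_one]
    constructor <;> simp [mul_pow, h₁, h₀, h₂]
  calc _ ≤ ENat.card (rootsOfUnity (E₁.gcd E₂) A) :=
        ENat.card_le_card_of_injective (f := fun c => ⟨c.1 * c₀⁻¹, hroot c.1 c.2⟩)
          fun c d hcd => Subtype.ext (by simpa using congrArg Subtype.val hcd)
    _ ≤ _ := card_rootsOfUnity_le hm

variable {j : ℕ}

theorem eq_zero_of_mem_isoSet_drinfeldPoly_single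
    (hnil : ∀ a ∈ maximalIdeal A, IsNilpotent a) (hq : 2 ≤ q) (hj : j ∈ Icc 1 (r - 1))
    {s t : A} {h : ℕ → A} {u : A[X]}
    (hu : u ∈ IsoSet q (drinfeldPoly q r s (fun i => if i = j then 1 else 0) 1)
      (drinfeldPoly q r t h 1))
    {k : ℕ} (hk : k ∈ Icc 1 (r - 1)) (hkj : k ≠ j) : h k = 0 := by
  obtain ⟨c, -, hcoeff, -⟩ :=
    exists_unit_of_mem_isoSet_drinfeldPoly hnil hq (by simp at hj; omega) hu
  have := hcoeff k hk
  rw [if_neg hkj, mul_zero, eq_comm] at this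
  exact ((c ^ q ^ k).isUnit.mul_left_eq_zero).mp (by simpa using this)

theorem encard_isoSet_drinfeldPoly_single_le
    (hnil : ∀ a ∈ maximalIdeal A, IsNilpotent a) (hq : 2 ≤ q) (hj : j ∈ Icc 1 (r - 1))
    (hG : IsUnit (((q ^ r - 1).gcd (q ^ j - 1) : ℕ) : A)) (s t : A) (h : ℕ → A) :
    (IsoSet q (drinfeldPoly q r s (fun i => if i = j then 1 else 0) 1)
      (drinfeldPoly q r t h 1)).encard ≤ (q ^ r - 1).gcd (q ^ j - 1) := by
  have hr : 1 ≤ r := by simp at hj; omega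
  have hpow : ∀ k, q ^ k ≠ 0 := fun k => pow_ne_zero _ (by omega)
  calc _ ≤ ((fun c : Aˣ => C (c : A) * X) ''
        {c | c ^ (q ^ r - 1) = 1 ∧ h j * ↑(c ^ (q ^ j - 1)) = 1}).encard := by
        refine Set.encard_le_encard fun u hu => ?_
        obtain ⟨c, hu, hcoeff, hcr⟩ := exists_unit_of_mem_isoSet_drinfeldPoly hnil hq hr hu
        have hcj := hcoeff j hj
        rw [if_pos rfl, mul_one] at hcj
        refine ⟨c, ⟨Units.val_eq_one.mp ?_, Units.mul_pow_pred_eq_one (hpow j) hcj⟩, hu.symm⟩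
        simpa using Units.mul_pow_pred_eq_one (hpow r) (c := c) (a := (1 : A)) (by rwa [one_mul])
    _ ≤ _ := (Set.encard_image_le _ _).trans (encard_setOf_pow_eq_one_le hG _)

end LocalRing

section Quotient

variable {W : Type*} [CommRing W] [IsLocalRing W] {μ : W} {n : ℕ}

lemma isLocalRing_quotient_span_pow (hμ : μ ∈ maximalIdeal W) (hn : n ≠ 0) :
    IsLocalRing (W ⧸ Ideal.span {μ ^ n}) :=
  have : Nontrivial (W ⧸ Ideal.span {μ ^ n}) := Ideal.Quotient.nontrivial_iff.mpr <| by
    rw [Ne, Ideal.span_singleton_eq_top]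
    exact fun h => hμ ((isUnit_pow_iff hn).mp h)
  .of_surjective' _ Ideal.Quotient.mk_surjective

lemma isNilpotent_of_mem_maximalIdeal_quotient_span_pow (hμ : maximalIdeal W = Ideal.span {μ})
    [IsLocalRing (W ⧸ Ideal.span {μ ^ n})] {a : W ⧸ Ideal.span {μ ^ n}}
    (ha : a ∈ maximalIdeal _) : IsNilpotent a := by
  obtain ⟨x, rfl⟩ := Ideal.Quotient.mk_surjective a
  have hx : x ∈ maximalIdeal W := fun hxu => ha (hxu.map _)
  rw [hμ, Ideal.mem_span_singleton] at hx
  refine ⟨n, ?_⟩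
  rw [← map_pow, Ideal.Quotient.eq_zero_iff_mem, Ideal.mem_span_singleton]
  exact pow_dvd_pow_of_dvd hx n

theorem encard_isoSet_quotient_span_pow_le (hμ : maximalIdeal W = Ideal.span {μ}) (hn : n ≠ 0)
    {q r j : ℕ} (hq : 2 ≤ q) (hj : j ∈ Icc 1 (r - 1))
    (hG : IsUnit (((q ^ r - 1).gcd (q ^ j - 1) : ℕ) : W)) (s t : W) (g : ℕ → W) :
    (IsoSet q ((drinfeldPoly q r s (fun i => if i = j then 1 else 0) 1).map
        (Ideal.Quotient.mk (Ideal.span {μ ^ n})))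
      ((drinfeldPoly q r t g 1).map (Ideal.Quotient.mk (Ideal.span {μ ^ n})))).encard ≤
      (q ^ r - 1).gcd (q ^ j - 1) := by
  have := isLocalRing_quotient_span_pow (hμ ▸ Ideal.mem_span_singleton_self μ) hn
  simp only [drinfeldPoly_map, map_one, Function.comp_def, apply_ite, map_zero]
  exact encard_isoSet_drinfeldPoly_single_le
    (fun _ => isNilpotent_of_mem_maximalIdeal_quotient_span_pow hμ) hq hj
    (by simpa using hG.map (Ideal.Quotient.mk (Ideal.span {μ ^ n}))) _ _ _

theorem pow_dvd_of_isoSet_quotient_span_pow_nonempty (hμ : maximalIdeal W = Ideal.span {μ})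
    (hn : n ≠ 0) {q r j : ℕ} (hq : 2 ≤ q) (hj : j ∈ Icc 1 (r - 1)) {s t : W} {g : ℕ → W}
    (hne : (IsoSet q ((drinfeldPoly q r s (fun i => if i = j then 1 else 0) 1).map
        (Ideal.Quotient.mk (Ideal.span {μ ^ n})))
      ((drinfeldPoly q r t g 1).map (Ideal.Quotient.mk (Ideal.span {μ ^ n})))).Nonempty)
    {i : ℕ} (hi : i ∈ (Icc 1 (r - 1)).erase j) : μ ^ n ∣ g i := by
  have := isLocalRing_quotient_span_pow (hμ ▸ Ideal.mem_span_singleton_self μ) hn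
  simp only [drinfeldPoly_map, map_one, Function.comp_def, apply_ite, map_zero] at hne
  obtain ⟨u, hu⟩ := hne
  have := eq_zero_of_mem_isoSet_drinfeldPoly_single
    (fun _ => isNilpotent_of_mem_maximalIdeal_quotient_span_pow hμ) hq hj hu
    (mem_of_mem_erase hi) (ne_of_mem_erase hi)
  rwa [Ideal.Quotient.eq_zero_iff_mem, Ideal.mem_span_singleton] at this

end Quotient

lemma le_of_pow_dvd_of_irreducible {W : Type*} [CommRing W] [IsDomain W]
    [IsDiscreteValuationRing W] {μ : W} (hμ : Irreducible μ) {ν : W → ℕ∞} (hν0 : ν 0 = ⊤)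
    (hν : ∀ (m : ℕ) (w : W), IsUnit w → ν (μ ^ m * w) = m) {x : W} {m : ℕ} (h : μ ^ m ∣ x) :
    (m : ℕ∞) ≤ ν x := by
  rcases eq_or_ne x 0 with rfl | hx
  · simp [hν0]
  obtain ⟨k, w, rfl⟩ := IsDiscreteValuationRing.eq_unit_mul_pow_irreducible hx hμ
  rw [mul_comm, hν k w w.isUnit, Nat.cast_le]
  rw [mul_comm, Units.dvd_mul_right] at h
  exact (pow_dvd_pow_iff hμ.ne_zero hμ.not_isUnit).mp h

lemma Nat.Prime.not_dvd_gcd_pow_sub_one {p : ℕ} (hp : p.Prime) {k : ℕ} (hk : k ≠ 0) (a : ℕ) :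
    ¬ p ∣ a.gcd (p ^ k - 1) := by
  intro hdvd
  have h1 : p ∣ p ^ k - (p ^ k - 1) :=
    Nat.dvd_sub (dvd_pow_self p hk) (hdvd.trans (Nat.gcd_dvd_right _ _))
  rw [Nat.sub_sub_self (Nat.one_le_pow _ _ hp.pos)] at h1
  exact hp.one_lt.ne' (Nat.dvd_one.mp h1)

lemma pow_sum_dvd_prod_single_sub_prod {R : Type*} [CommRing R] (s : Finset ℕ) (j : ℕ)
    (δ : ℕ → ℕ) (g : ℕ → R) {x : R} (hx : ∀ i ∈ s.erase j, x ∣ g i) :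
    x ^ (∑ i ∈ s.erase j, δ i) ∣
      (∏ i ∈ s, (if i = j then (1 : R) else 0) ^ δ i) - ∏ i ∈ s, g i ^ δ i := by
  rcases eq_or_ne (∑ i ∈ s.erase j, δ i) 0 with hS | hS
  · rw [hS, pow_zero]
    exact one_dvd _
  obtain ⟨i₀, hi₀, hδ⟩ := exists_ne_zero_of_sum_ne_zero hS
  have hzero : ∏ i ∈ s, (if i = j then (1 : R) else 0) ^ δ i = 0 :=
    prod_eq_zero (mem_of_mem_erase hi₀) (by rw [if_neg (ne_of_mem_erase hi₀), zero_pow hδ])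
  rw [hzero, zero_sub, dvd_neg, ← prod_pow_eq_pow_sum]
  calc ∏ i ∈ s.erase j, x ^ δ i ∣ ∏ i ∈ s.erase j, g i ^ δ i :=
        prod_dvd_prod_of_dvd _ _ fun i hi => pow_dvd_pow_of_dvd (hx i hi) _
    _ ∣ ∏ i ∈ s, g i ^ δ i := prod_dvd_prod_of_subset _ _ _ (erase_subset _ _)

lemma mul_iSup_sum_Icc_le (a : ℕ → ℕ∞) (G S : ℕ) (V : ℕ∞) (hG : ∀ n, 1 ≤ n → a n ≤ G)
    (hV : ∀ n, 1 ≤ n → a n ≠ 0 → (n * S : ℕ∞) ≤ V) :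
    (S : ℕ∞) * ⨆ N, ∑ n ∈ Icc 1 N, a n ≤ G * V := by
  rw [ENat.mul_iSup]
  refine iSup_le fun N => ?_
  set M := Nat.findGreatest (fun n => a n ≠ 0) N with hM
  have hsum : ∑ n ∈ Icc 1 N, a n ≤ M * G :=
    calc ∑ n ∈ Icc 1 N, a n = ∑ n ∈ Icc 1 M, a n := by
          refine (sum_subset (Icc_subset_Icc_right (Nat.findGreatest_le N))
            fun n hn hnM => ?_).symm
          simp only [mem_Icc, not_and, not_le] at hn hnM
          exact not_not.mp (Nat.findGreatest_is_greatest (hnM hn.1) hn.2)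
      _ ≤ ∑ n ∈ Icc 1 M, (G : ℕ∞) := sum_le_sum fun n hn => hG n (mem_Icc.mp hn).1
      _ = M * G := by simp
  rcases Nat.eq_zero_or_pos M with hM0 | hM0
  · rw [hM0, Nat.cast_zero, zero_mul, nonpos_iff_eq_zero] at hsum
    simp [hsum]
  · have hMV := hV M hM0 (Nat.findGreatest_of_ne_zero hM.symm hM0.ne')
    calc (S : ℕ∞) * ∑ n ∈ Icc 1 N, a n ≤ S * (M * G) := by gcongr
      _ = G * (M * S) := by ring
      _ ≤ G * V := by gcongr

open Polynomial in
theorem stmt19_general (p : ℕ) (hp : p.Prime) (e : ℕ) (he : 0 < e) (q : ℕ) (hq : q = p ^ e)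
    (W : Type*) [CommRing W] [IsDomain W] [IsDiscreteValuationRing W] [CharP W p]
    (μ : W) (hμ : Irreducible μ)
    (ν : W → ℕ∞) (hν0 : ν 0 = ⊤)
    (hν : ∀ (m : ℕ) (w : W), IsUnit w → ν (μ ^ m * w) = m)
    (r j : ℕ) (hj1 : 1 ≤ j) (hj2 : j ≤ r - 1)
    (t : W) (g g' : ℕ → W)
    (hg : g = fun i => if i = j then (1 : W) else 0)
    (φ φ' : Polynomial W)
    (hφ : φ = C t * X + X ^ q ^ j + X ^ q ^ r)
    (hφ' : φ' = C t * X + (∑ i ∈ Finset.Icc 1 (r - 1), C (g' i) * X ^ q ^ i) + X ^ q ^ r)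
    (δ : ℕ → ℕ) :
    ((Nat.gcd (q ^ r - 1) (q ^ j - 1) : ℕ) : ℕ∞) *
        ν ((∏ i ∈ Finset.Icc 1 (r - 1), g i ^ δ i)
            - ∏ i ∈ Finset.Icc 1 (r - 1), g' i ^ δ i) ≥
      ((∑ i ∈ (Finset.Icc 1 (r - 1)).erase j, δ i : ℕ) : ℕ∞) *
        ⨆ N : ℕ, ∑ n ∈ Finset.Icc 1 N,
          (IsoSet q (φ.map (Ideal.Quotient.mk (Ideal.span {μ ^ n})))
            (φ'.map (Ideal.Quotient.mk (Ideal.span {μ ^ n})))).encard := by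
  have hq2 : 2 ≤ q := hq ▸ hp.two_le.trans (Nat.le_self_pow he.ne' p)
  have hj : j ∈ Finset.Icc 1 (r - 1) := Finset.mem_Icc.mpr ⟨hj1, hj2⟩
  have hmax := (IsDiscreteValuationRing.irreducible_iff_uniformizer μ).mp hμ
  have hG : IsUnit (((q ^ r - 1).gcd (q ^ j - 1) : ℕ) : W) := by
    rw [CharP.isUnit_natCast_iff hp, hq, ← pow_mul p e j]
    exact hp.not_dvd_gcd_pow_sub_one (mul_ne_zero he.ne' (by omega)) _
  subst hg
  have hφ₀ : φ = drinfeldPoly q r t (fun i => if i = j then 1 else 0) 1 := by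
    simp [hφ, drinfeldPoly, Finset.sum_ite_eq', hj]
  have hφ'₀ : φ' = drinfeldPoly q r t g' 1 := by rw [hφ', drinfeldPoly, C_1, one_mul]
  rw [hφ₀, hφ'₀]
  refine mul_iSup_sum_Icc_le _ _ _ _
    (fun n hn => encard_isoSet_quotient_span_pow_le hmax (by omega) hq2 hj hG _ _ _)
    fun n hn hne => le_of_pow_dvd_of_irreducible hμ hν0 hν ?_
  rw [pow_mul]
  exact pow_sum_dvd_prod_single_sub_prod _ _ _ _ fun i hi =>
    pow_dvd_of_isoSet_quotient_span_pow_nonempty hmax (by omega) hq2 hj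
      (Set.nonempty_of_encard_ne_zero hne) hi

open Polynomial in
/-- The refined estimate of the Example following Proposition 3.9, for the sparse rank-`r`
Drinfeld module `φ_T = t + τ^j + τ^r` (so `g_j = 1` and `g_i = 0` for `i ≠ j`). -/
theorem stmt19 (p : ℕ) (hp : p.Prime) (e : ℕ) (he : 0 < e) (q : ℕ) (hq : q = p ^ e)
    (W : Type*) [CommRing W] [IsDomain W] [IsDiscreteValuationRing W] [CharP W p]
    [IsAdicComplete (IsLocalRing.maximalIdeal W) W]
    [IsAlgClosed (IsLocalRing.ResidueField W)]
    (μ : W) (hμ : Irreducible μ)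
    (ν : W → ℕ∞) (hν0 : ν 0 = ⊤)
    (hν : ∀ (m : ℕ) (w : W), IsUnit w → ν (μ ^ m * w) = m)
    (r j : ℕ) (hr : 2 ≤ r) (hj1 : 1 ≤ j) (hj2 : j ≤ r - 1)
    (t : W) (g g' : ℕ → W)
    (hg : g = fun i => if i = j then (1 : W) else 0)
    (φ φ' : Polynomial W)
    (hφ : φ = C t * X + X ^ q ^ j + X ^ q ^ r)
    (hφ' : φ' = C t * X + (∑ i ∈ Finset.Icc 1 (r - 1), C (g' i) * X ^ q ^ i) + X ^ q ^ r)
    (δ : ℕ → ℕ) (δr : ℕ) (hδr : 0 < δr)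
    (hδ : (∑ i ∈ Finset.Icc 1 (r - 1), δ i * (q ^ i - 1)) = δr * (q ^ r - 1)) :
    ((Nat.gcd (q ^ r - 1) (q ^ j - 1) : ℕ) : ℕ∞) *
        ν ((∏ i ∈ Finset.Icc 1 (r - 1), g i ^ δ i)
            - ∏ i ∈ Finset.Icc 1 (r - 1), g' i ^ δ i) ≥
      ((∑ i ∈ (Finset.Icc 1 (r - 1)).erase j, δ i : ℕ) : ℕ∞) *
        ⨆ N : ℕ, ∑ n ∈ Finset.Icc 1 N,
          (IsoSet q (φ.map (Ideal.Quotient.mk (Ideal.span {μ ^ n})))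
            (φ'.map (Ideal.Quotient.mk (Ideal.span {μ ^ n})))).encard :=
  stmt19_general p hp e he q hq W μ hμ ν hν0 hν r j hj1 hj2 t g g' hg φ φ' hφ hφ' δ
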